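/- The ı-divided powers defined by the closed product formulas satisfy the following recursive relations in K[B]: (1) B · B_ev^{(0)} = B_ev^{(1)}; (2) for every integer a ≥ 1, B · B_ev^{(2a−1)} = [2a] · B_ev^{(2a)}; (3) for every integer a ≥ 1, B · B_ev^{(2a)} = [2a+1] · B_ev^{(2a+1)} + qς·[2a] · B_ev^{(2a−1)}; (4) for every integer a ≥ 0, B · B_odd^{(2a)} = [2a+1] · B_odd^{(2a+1)}; (5) for every integer a ≥ 0, B · B_odd^{(2a+1)} = [2a+2] · B_odd^{(2a+2)} + qς·[2a+1] · B_odd^{(2a)}. -/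

import Mathlib

noncomputable section

open Polynomial Finset

abbrev Kq : Type := RatFunc ℚ

/-- The variable `q` in `ℚ(q)`. -/
def qq : Kq := RatFunc.X

/-- The quantum integer `[n] = (q^n - q^{-n})/(q - q^{-1})` for `n : ℤ`. -/
def qint (n : ℤ) : Kq := (qq ^ n - qq ^ (-n)) / (qq - qq⁻¹)

/-- The quantum factorial `[n]! = ∏_{i=1}^n [i]`. -/
def qfact (n : ℕ) : Kq := ∏ i ∈ Finset.range n, qint ((i : ℤ) + 1)

/-- The quantum binomial `[n choose m] = [n]!/([m]!·[n-m]!)`. -/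
def qbinom (n m : ℕ) : Kq := qfact n / (qfact m * qfact (n - m))

/-- The even ı-divided power `B_ev^{(n)}` in `K[B]`. -/
def BevP (ς : Kq) (n : ℕ) : Polynomial Kq :=
  if Even n then
    Polynomial.C (qfact n)⁻¹ *
      ∏ j ∈ Finset.range (n / 2),
        ((Polynomial.X : Polynomial Kq) ^ 2 - Polynomial.C (qq * ς * (qint (2 * (j : ℤ))) ^ 2))
  else
    Polynomial.C (qfact n)⁻¹ *
      (Polynomial.X *
        ∏ j ∈ Finset.range (n / 2),
          ((Polynomial.X : Polynomial Kq) ^ 2 - Polynomial.C (qq * ς * (qint (2 * (j : ℤ) + 2)) ^ 2)))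

/-- The odd ı-divided power `B_odd^{(n)}` in `K[B]`. -/
def BoddP (ς : Kq) (n : ℕ) : Polynomial Kq :=
  if Even n then
    Polynomial.C (qfact n)⁻¹ *
      ∏ j ∈ Finset.range (n / 2),
        ((Polynomial.X : Polynomial Kq) ^ 2 - Polynomial.C (qq * ς * (qint (2 * (j : ℤ) + 1)) ^ 2))
  else
    Polynomial.C (qfact n)⁻¹ *
      (Polynomial.X *
        ∏ j ∈ Finset.range (n / 2),
          ((Polynomial.X : Polynomial Kq) ^ 2 - Polynomial.C (qq * ς * (qint (2 * (j : ℤ) + 1)) ^ 2)))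

lemma qq_ne : qq ≠ 0 := RatFunc.X_ne_zero
lemma qq_pow_ne_one (m : ℕ) (h : m ≠ 0) : qq ^ m ≠ (1 : Kq) := by
  intro hm
  have : (Polynomial.X : Polynomial ℚ) ^ m = 1 := by
    apply RatFunc.algebraMap_injective ℚ
    simpa [qq, map_pow] using hm
  have := congrArg Polynomial.natDegree this
  simp [Polynomial.natDegree_X_pow] at this
  exact h this
lemma hd : qq - qq⁻¹ ≠ 0 := by
  intro h
  have h1 : qq = qq⁻¹ := by rwa [sub_eq_zero] at h
  have : qq ^ 2 = 1 := by
    rw [sq]; nth_rewrite 2 [h1]; exact mul_inv_cancel₀ qq_ne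
  exact qq_pow_ne_one 2 (by norm_num) this
lemma qint_nat_ne (n : ℕ) (h : n ≠ 0) : qint (n : ℤ) ≠ 0 := by
  have hnum : qq ^ n - (qq ^ n)⁻¹ ≠ 0 := by
    intro hm
    have h1 : qq ^ n = (qq ^ n)⁻¹ := by rwa [sub_eq_zero] at hm
    have : qq ^ (2 * n) = 1 := by
      rw [two_mul, pow_add]; nth_rewrite 2 [h1]
      exact mul_inv_cancel₀ (pow_ne_zero _ qq_ne)
    exact qq_pow_ne_one (2 * n) (by omega) this
  unfold qint
  rw [zpow_natCast, zpow_neg, zpow_natCast]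
  exact div_ne_zero hnum hd
lemma qint_zero : qint 0 = 0 := by simp [qint]
lemma qint_one : qint 1 = 1 := by
  unfold qint
  rw [zpow_one, zpow_neg, zpow_one, div_self hd]
lemma qfact_zero : qfact 0 = 1 := by simp [qfact]
lemma qfact_succ (n : ℕ) : qfact (n + 1) = qfact n * qint ((n : ℤ) + 1) := by
  simp [qfact, Finset.prod_range_succ]
lemma qfact_one : qfact 1 = 1 := by
  rw [show (1:ℕ) = 0 + 1 from rfl, qfact_succ, qfact_zero]
  norm_num [qint_one]
lemma qfact_inv_succ (n : ℕ) : (qfact n)⁻¹ = qint ((n : ℤ) + 1) * (qfact (n + 1))⁻¹ := by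
  rw [qfact_succ, mul_inv, ← mul_assoc, mul_comm (qint _), mul_assoc,
    mul_inv_cancel₀, mul_one]
  have : ((n : ℤ) + 1) = ((n + 1 : ℕ) : ℤ) := by push_cast; ring
  rw [this]; exact qint_nat_ne _ (by omega)

lemma keyC (b : ℕ) : (qfact (2*b))⁻¹ = qint (2*(b:ℤ)+1) * (qfact (2*b+1))⁻¹ := by
  have h := qfact_inv_succ (2*b)
  rw [h]; congr 2
lemma keyA (b : ℕ) : (qfact (2*b+1))⁻¹ = qint (2*(b:ℤ)+2) * (qfact (2*b+2))⁻¹ := by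
  have h := qfact_inv_succ (2*b+1)
  rw [show 2*b+1+1 = 2*b+2 from by omega] at h
  rw [h]; congr 2
lemma keyB (b : ℕ) : (qfact (2*b+2))⁻¹ = qint (2*(b:ℤ)+3) * (qfact (2*b+3))⁻¹ := by
  have h := qfact_inv_succ (2*b+2)
  rw [show 2*b+2+1 = 2*b+3 from by omega] at h
  rw [h]; congr 2

lemma shiftEv (ς : Kq) (b : ℕ) :
    (∏ j ∈ Finset.range (b+1),
      ((Polynomial.X : Polynomial Kq) ^ 2 - Polynomial.C (qq * ς * (qint (2 * (j : ℤ))) ^ 2)))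
    = X ^ 2 * ∏ j ∈ Finset.range b,
        ((Polynomial.X : Polynomial Kq) ^ 2 - Polynomial.C (qq * ς * (qint (2 * (j : ℤ) + 2)) ^ 2)) := by
  rw [Finset.prod_range_succ']
  have h0 : ((Polynomial.X : Polynomial Kq) ^ 2
      - Polynomial.C (qq * ς * (qint (2 * ((0:ℕ) : ℤ))) ^ 2)) = X ^ 2 := by
    simp [qint_zero]
  rw [h0, mul_comm]
  congr 1

/-- The recursive relations satisfied by the ı-divided powers. -/
theorem idivided_powers_recursion (ς : Kq) (hς : ς ≠ 0) :
    (Polynomial.X * BevP ς 0 = BevP ς 1) ∧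
    (∀ a : ℕ, 1 ≤ a →
      Polynomial.X * BevP ς (2 * a - 1) = Polynomial.C (qint (2 * (a : ℤ))) * BevP ς (2 * a)) ∧
    (∀ a : ℕ, 1 ≤ a →
      Polynomial.X * BevP ς (2 * a) =
        Polynomial.C (qint (2 * (a : ℤ) + 1)) * BevP ς (2 * a + 1) +
          Polynomial.C (qq * ς * qint (2 * (a : ℤ))) * BevP ς (2 * a - 1)) ∧
    (∀ a : ℕ,
      Polynomial.X * BoddP ς (2 * a) = Polynomial.C (qint (2 * (a : ℤ) + 1)) * BoddP ς (2 * a + 1)) ∧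
    (∀ a : ℕ,
      Polynomial.X * BoddP ς (2 * a + 1) =
        Polynomial.C (qint (2 * (a : ℤ) + 2)) * BoddP ς (2 * a + 2) +
          Polynomial.C (qq * ς * qint (2 * (a : ℤ) + 1)) * BoddP ς (2 * a)) := by
  refine ⟨?_, ?_, ?_, ?_, ?_⟩
  · -- (1)
    rw [BevP, BevP]
    norm_num [qfact_zero, qfact_one]
  · -- (2)
    rintro a ha
    obtain ⟨b, rfl⟩ : ∃ b, a = b + 1 := ⟨a - 1, by omega⟩
    rw [show 2*(b+1)-1 = 2*b+1 from by omega, show 2*(b+1) = 2*b+2 from by omega]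
    have hodd : ¬ Even (2*b+1) := by simp [Nat.even_add_one, parity_simps]
    have heven : Even (2*b+2) := ⟨b+1, by omega⟩
    rw [BevP, if_neg hodd, BevP, if_pos heven,
      show (2*b+1)/2 = b from by omega, show (2*b+2)/2 = b+1 from by omega,
      shiftEv, keyA,
      show qint (2*(((b+1:ℕ)):ℤ)) = qint (2*(b:ℤ)+2) from by congr 1]
    simp only [map_mul]
    ring
  · -- (3)
    rintro a ha
    obtain ⟨b, rfl⟩ : ∃ b, a = b + 1 := ⟨a - 1, by omega⟩
    rw [show 2*(b+1)-1 = 2*b+1 from by omega, show 2*(b+1) = 2*b+2 from by omega,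
      show 2*b+2+1 = 2*b+3 from by omega]
    have hodd1 : ¬ Even (2*b+1) := by simp [Nat.even_add_one, parity_simps]
    have hodd3 : ¬ Even (2*b+3) := by simp [Nat.even_add_one, parity_simps]
    have heven : Even (2*b+2) := ⟨b+1, by omega⟩
    rw [BevP, if_pos heven, BevP, if_neg hodd3, BevP, if_neg hodd1,
      show (2*b+2)/2 = b+1 from by omega, show (2*b+3)/2 = b+1 from by omega,
      show (2*b+1)/2 = b from by omega,
      shiftEv, Finset.prod_range_succ, keyA, keyB,
      show qint (2*(((b+1:ℕ)):ℤ)) = qint (2*(b:ℤ)+2) from by congr 1,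
      show qint (2*(((b+1:ℕ)):ℤ)+1) = qint (2*(b:ℤ)+3) from by congr 1]
    simp only [map_mul, map_pow]
    ring
  · -- (4)
    intro a
    have heven : Even (2*a) := ⟨a, by omega⟩
    have hodd : ¬ Even (2*a+1) := by simp [Nat.even_add_one, parity_simps]
    rw [BoddP, if_pos heven, BoddP, if_neg hodd,
      show (2*a)/2 = a from by omega, show (2*a+1)/2 = a from by omega, keyC]
    simp only [map_mul]
    ring
  · -- (5)
    intro a
    have heven : Even (2*a) := ⟨a, by omega⟩
    have heven2 : Even (2*a+2) := ⟨a+1, by omega⟩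
    have hodd : ¬ Even (2*a+1) := by simp [Nat.even_add_one, parity_simps]
    rw [BoddP, if_neg hodd, BoddP, if_pos heven2, BoddP, if_pos heven,
      show (2*a+1)/2 = a from by omega, show (2*a+2)/2 = a+1 from by omega,
      show (2*a)/2 = a from by omega,
      Finset.prod_range_succ, keyC, keyA, keyB]
    simp only [map_mul, map_pow]
    ring
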